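/- arXiv:2504.16248 — 2 statements merged into one kernel-verified Lean document; each statement's English description precedes it below -/
import Mathlib

section
/- The lattice P is generated as a ℤ-module by R together with the three vectors v₁ := e(L₁₂) − e((1,0)+L₁₂), v₂ := e(L₃₄) − e((0,1)+L₃₄), and v₃ := (1/3)·∑_{t∈𝔽₃²} E_t; moreover R has index 27 in P, i.e. |P/R| = 3³. -/
noncomputable section

abbrev F3 : Type := ZMod 3 × ZMod 3
abbrev IP : Type := F3 × Fin 2
abbrev VP : Type := IP → ℚ

/-- The basis vectors `E_t^(k)` (with `k : Fin 2` corresponding to `k+1 ∈ {1,2}`). -/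
def Ev (t : F3) (k : Fin 2) : VP := Pi.single (t, k) 1

/-- Gram coefficients of the bilinear form on `V`. -/
def GP : IP → IP → ℚ := fun i j =>
  if i.1 = j.1 then (if i.2 = j.2 then -2 else 1) else 0

/-- The symmetric bilinear form on `V`. -/
def BP (x y : VP) : ℚ := ∑ i : IP, ∑ j : IP, x i * GP i j * y j

lemma BP_add_left (a b x : VP) : BP (a + b) x = BP a x + BP b x := by
  simp only [BP, Pi.add_apply, add_mul, Finset.sum_add_distrib]

lemma BP_zsmul_left (c : ℤ) (a x : VP) : BP (c • a) x = c * BP a x := by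
  simp only [BP, Pi.smul_apply, zsmul_eq_mul, Finset.mul_sum, mul_assoc]

lemma BP_zero_left (x : VP) : BP 0 x = 0 := by
  simp [BP]

/-- `E_t := E_t^(1) + 2·E_t^(2)`. -/
def EV (t : F3) : VP := Ev t 0 + 2 • Ev t 1

/-- The affine line in `𝔽₃²` through `p` with direction `d`. -/
def lineF (p d : F3) : Finset F3 := Finset.image (fun s : ZMod 3 => p + s • d) Finset.univ

def IsLine (L : Finset F3) : Prop := ∃ p d : F3, d ≠ 0 ∧ L = lineF p d

def AreParallel (L L' : Finset F3) : Prop :=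
  ∃ p p' d : F3, d ≠ 0 ∧ L = lineF p d ∧ L' = lineF p' d

/-- `e(L) := (1/3)·∑_{t∈L} E_t`. -/
def eL (L : Finset F3) : VP := (3 : ℚ)⁻¹ • ∑ t ∈ L, EV t

/-- Generators of the root lattice `R` of type `A₂⁹`. -/
def Rgen : Set VP := {x | ∃ t k, x = Ev t k}

/-- The root lattice `R`. -/
def Rlat : Submodule ℤ VP := Submodule.span ℤ Rgen

/-- The lattice `P`. -/
def Plat : Submodule ℤ VP :=
  Submodule.span ℤ (Rgen ∪ {x | ∃ L L', AreParallel L L' ∧ x = eL L - eL L'})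

/-- The dual lattice `Λ* = {v | ⟨v,λ⟩ ∈ ℤ for all λ ∈ Λ}`. -/
def dualP (Λ : Submodule ℤ VP) : Submodule ℤ VP where
  carrier := {v | ∀ x ∈ Λ, ∃ n : ℤ, BP v x = n}
  zero_mem' := fun x _ => ⟨0, by simp [BP_zero_left]⟩
  add_mem' := by
    intro a b ha hb x hx
    obtain ⟨n, hn⟩ := ha x hx
    obtain ⟨m, hm⟩ := hb x hx
    exact ⟨n + m, by rw [BP_add_left, hn, hm]; push_cast; ring⟩
  smul_mem' := by
    intro c v hv x hx
    obtain ⟨n, hn⟩ := hv x hx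
    exact ⟨c * n, by rw [BP_zsmul_left, hn]; push_cast; ring⟩

def L12 : Finset F3 := lineF (0, 0) (0, 1)
def L34 : Finset F3 := lineF (0, 0) (1, 0)
def L00 : Finset F3 := lineF (0, 0) (1, 1)

def p1 : VP := eL L34 + eL L00
def p2 : VP := eL L12 + eL L34
def p3 : VP := eL L12 + eL L00

def pv : Fin 3 → VP := ![p1, p2, p3]

/-- `v₁ := e(L₁₂) − e((1,0)+L₁₂)`. -/
def v1 : VP := eL L12 - eL (lineF (1, 0) (0, 1))

/-- `v₂ := e(L₃₄) − e((0,1)+L₃₄)`. -/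
def v2 : VP := eL L34 - eL (lineF (0, 1) (1, 0))

/-- `v₃ := (1/3)·∑_{t∈𝔽₃²} E_t`. -/
def v3 : VP := (3 : ℚ)⁻¹ • ∑ t : F3, EV t


/-! ### Auxiliary machinery -/

section Aux

/-- vertical lines `x = c` -/
def XLn (c : ZMod 3) : Finset F3 := lineF (c, 0) (0, 1)
/-- horizontal lines `y = c` -/
def YLn (c : ZMod 3) : Finset F3 := lineF (0, c) (1, 0)
/-- diagonal lines `x - y = c` -/
def DLn (c : ZMod 3) : Finset F3 := lineF (c, 0) (1, 1)
/-- antidiagonal lines `x + y = c` -/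
def ELn (c : ZMod 3) : Finset F3 := lineF (c, 0) (1, 2)

def Mlat : Submodule ℤ VP := Submodule.span ℤ (Rgen ∪ {v1, v2, v3})

/-- The submodule of integral vectors. -/
def intSub : Submodule ℤ VP where
  carrier := {x | ∀ i, ∃ n : ℤ, x i = n}
  zero_mem' := fun _ => ⟨0, by simp⟩
  add_mem' := by
    intro a b ha hb i
    obtain ⟨n, hn⟩ := ha i
    obtain ⟨m, hm⟩ := hb i
    exact ⟨n + m, by simp [hn, hm]⟩
  smul_mem' := by
    intro c x hx i
    obtain ⟨n, hn⟩ := hx i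
    exact ⟨c * n, by simp [hn, mul_comm]⟩

lemma EV_apply (t : F3) (i : IP) :
    EV t i = if i.1 = t then (if i.2 = 0 then 1 else 2) else 0 := by
  rcases i with ⟨s, k⟩
  fin_cases k <;> simp [EV, Ev, Pi.single_apply, Prod.ext_iff]

lemma eL_apply (L : Finset F3) (i : IP) :
    eL L i = if i.1 ∈ L then (if i.2 = 0 then 1/3 else 2/3) else 0 := by
  have h : eL L i = 3⁻¹ * ∑ t ∈ L, EV t i := by simp [eL, Finset.sum_apply]
  rw [h]
  simp only [EV_apply]
  rw [Finset.sum_ite_eq]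
  split
  · split <;> norm_num
  · norm_num

lemma v3_apply (i : IP) : v3 i = if i.2 = 0 then 1/3 else 2/3 := by
  have h : v3 i = 3⁻¹ * ∑ t : F3, EV t i := by simp [v3, Finset.sum_apply]
  rw [h]
  simp only [EV_apply]
  rw [Finset.sum_ite_eq]
  simp only [Finset.mem_univ, if_true]
  split <;> norm_num

lemma EV_mem (t : F3) : EV t ∈ Rlat := by
  have h0 : Ev t 0 ∈ Rlat := Submodule.subset_span ⟨t, 0, rfl⟩
  have h1 : Ev t 1 ∈ Rlat := Submodule.subset_span ⟨t, 1, rfl⟩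
  rw [EV, two_smul]
  exact add_mem h0 (add_mem h1 h1)

lemma sumEV_mem (s : Finset F3) : (∑ t ∈ s, EV t) ∈ Rlat :=
  Submodule.sum_mem _ fun t _ => EV_mem t

lemma three_smul_inv_mem (s : Finset F3) :
    (3 : ℤ) • ((3 : ℚ)⁻¹ • ∑ t ∈ s, EV t) ∈ Rlat := by
  have h : (3 : ℤ) • ((3 : ℚ)⁻¹ • ∑ t ∈ s, EV t) = ∑ t ∈ s, EV t := by
    rw [← Int.cast_smul_eq_zsmul ℚ, smul_smul]
    norm_num
  rw [h]
  exact sumEV_mem s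

lemma three_eL_mem (L : Finset F3) : (3 : ℤ) • eL L ∈ Rlat := three_smul_inv_mem L

lemma three_v3_mem : (3 : ℤ) • v3 ∈ Rlat := three_smul_inv_mem Finset.univ

lemma three_v1_mem : (3 : ℤ) • v1 ∈ Rlat := by
  have h : (3 : ℤ) • v1 = (3 : ℤ) • eL L12 - (3 : ℤ) • eL (lineF (1, 0) (0, 1)) := by
    rw [v1, smul_sub]
  rw [h]
  exact sub_mem (three_eL_mem _) (three_eL_mem _)

lemma three_v2_mem : (3 : ℤ) • v2 ∈ Rlat := by
  have h : (3 : ℤ) • v2 = (3 : ℤ) • eL L34 - (3 : ℤ) • eL (lineF (0, 1) (1, 0)) := by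
    rw [v2, smul_sub]
  rw [h]
  exact sub_mem (three_eL_mem _) (three_eL_mem _)

lemma Rlat_le_int : Rlat ≤ intSub := by
  rw [Rlat, Submodule.span_le]
  rintro x ⟨t, k, rfl⟩ i
  by_cases h : i = (t, k)
  · subst h; exact ⟨1, by simp [Ev]⟩
  · exact ⟨0, by simp [Ev, Pi.single_apply, h]⟩

lemma int_le_Rlat : intSub ≤ Rlat := by
  intro x hx
  choose n hn using hx
  have hx' : x = ∑ i : IP, (n i : ℤ) • Ev i.1 i.2 := by
    funext j
    rw [Finset.sum_apply]
    rw [Finset.sum_eq_single j]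
    · simp [Ev, hn j]
    · intro i _ hij
      simp [Ev, Pi.single_apply, (by simpa using Ne.symm hij : j ≠ (i.1, i.2))]
    · simp
  rw [hx']
  exact Submodule.sum_mem _ fun i _ =>
    Submodule.smul_mem _ _ (Submodule.subset_span ⟨i.1, i.2, rfl⟩)

lemma Rlat_le_Mlat : Rlat ≤ Mlat :=
  Submodule.span_mono Set.subset_union_left

lemma v1_mem_Mlat : v1 ∈ Mlat := Submodule.subset_span (Or.inr (by simp))
lemma v2_mem_Mlat : v2 ∈ Mlat := Submodule.subset_span (Or.inr (by simp))
lemma v3_mem_Mlat : v3 ∈ Mlat := Submodule.subset_span (Or.inr (by simp))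

/-- Sum identities for the four families of lines. -/
lemma sumX : eL (XLn 0) + eL (XLn 1) + eL (XLn 2) = v3 := by
  funext i
  rcases i with ⟨⟨x, y⟩, k⟩
  simp only [Pi.add_apply, eL_apply, v3_apply, XLn]
  fin_cases x <;> fin_cases y <;> fin_cases k <;>
    simp (config := { decide := true })

lemma sumY : eL (YLn 0) + eL (YLn 1) + eL (YLn 2) = v3 := by
  funext i
  rcases i with ⟨⟨x, y⟩, k⟩
  simp only [Pi.add_apply, eL_apply, v3_apply, YLn]
  fin_cases x <;> fin_cases y <;> fin_cases k <;>
    simp (config := { decide := true })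

lemma sumD : eL (DLn 0) + eL (DLn 1) + eL (DLn 2) = v3 := by
  funext i
  rcases i with ⟨⟨x, y⟩, k⟩
  simp only [Pi.add_apply, eL_apply, v3_apply, DLn]
  fin_cases x <;> fin_cases y <;> fin_cases k <;>
    simp (config := { decide := true })

lemma sumE : eL (ELn 0) + eL (ELn 1) + eL (ELn 2) = v3 := by
  funext i
  rcases i with ⟨⟨x, y⟩, k⟩
  simp only [Pi.add_apply, eL_apply, v3_apply, ELn]
  fin_cases x <;> fin_cases y <;> fin_cases k <;>
    simp (config := { decide := true })

lemma gX_eq : eL (XLn 0) - eL (XLn 1) = v1 := rfl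

lemma gY_eq : eL (YLn 0) - eL (YLn 1) = v2 := rfl

/-- The key identity for the diagonal family. -/
lemma gD_eq : eL (DLn 0) - eL (DLn 1) =
    v1 + v2 + v2 + v3
      - EV (0, 0) - EV (0, 2) - EV (1, 0) + EV (1, 1) - EV (2, 0) := by
  funext i
  rcases i with ⟨⟨x, y⟩, k⟩
  simp only [Pi.add_apply, Pi.sub_apply, eL_apply, v3_apply, EV_apply, DLn,
    v1, v2, L12, L34]
  fin_cases x <;> fin_cases y <;> fin_cases k <;>
    · simp (config := { decide := true })
      try norm_num

/-- The key identity for the antidiagonal family. -/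
lemma gE_eq : eL (ELn 0) - eL (ELn 1) =
    v1 + v2 + v3 + v3
      - EV (0, 0) - EV (0, 1) - EV (0, 2) - EV (1, 0) - EV (2, 0) - EV (2, 2) := by
  funext i
  rcases i with ⟨⟨x, y⟩, k⟩
  simp only [Pi.add_apply, Pi.sub_apply, eL_apply, v3_apply, EV_apply, ELn,
    v1, v2, L12, L34]
  fin_cases x <;> fin_cases y <;> fin_cases k <;>
    · simp (config := { decide := true })
      try norm_num

lemma gD_mem : eL (DLn 0) - eL (DLn 1) ∈ Mlat := by
  rw [gD_eq]
  have hR : ∀ t : F3, EV t ∈ Mlat := fun t => Rlat_le_Mlat (EV_mem t)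
  exact sub_mem (add_mem (sub_mem (sub_mem (sub_mem
    (add_mem (add_mem (add_mem v1_mem_Mlat v2_mem_Mlat) v2_mem_Mlat) v3_mem_Mlat)
    (hR _)) (hR _)) (hR _)) (hR _)) (hR _)

lemma gE_mem : eL (ELn 0) - eL (ELn 1) ∈ Mlat := by
  rw [gE_eq]
  have hR : ∀ t : F3, EV t ∈ Mlat := fun t => Rlat_le_Mlat (EV_mem t)
  exact sub_mem (sub_mem (sub_mem (sub_mem (sub_mem (sub_mem
    (add_mem (add_mem (add_mem v1_mem_Mlat v2_mem_Mlat) v3_mem_Mlat) v3_mem_Mlat)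
    (hR _)) (hR _)) (hR _)) (hR _)) (hR _)) (hR _)

lemma family_diff (A : ZMod 3 → Finset F3)
    (hg : eL (A 0) - eL (A 1) ∈ Mlat)
    (hsum : eL (A 0) + eL (A 1) + eL (A 2) = v3) :
    ∀ c c' : ZMod 3, eL (A c) - eL (A c') ∈ Mlat := by
  have key : ∀ c, eL (A c) - eL (A 0) ∈ Mlat := by
    intro c
    rcases (by decide : ∀ c : ZMod 3, c = 0 ∨ c = 1 ∨ c = 2) c with rfl | rfl | rfl
    · rw [sub_self]; exact Submodule.zero_mem _
    · have h : eL (A 1) - eL (A 0) = -(eL (A 0) - eL (A 1)) := by abel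
      rw [h]; exact neg_mem hg
    · have h : eL (A 2) - eL (A 0) =
          v3 + (eL (A 0) - eL (A 1)) - (3 : ℤ) • eL (A 0) := by
        rw [← hsum]; abel
      rw [h]
      exact sub_mem (add_mem v3_mem_Mlat hg) (Rlat_le_Mlat (three_eL_mem _))
  intro c c'
  have h : eL (A c) - eL (A c') = (eL (A c) - eL (A 0)) - (eL (A c') - eL (A 0)) := by
    abel
  rw [h]
  exact sub_mem (key c) (key c')

/-- Classification of affine lines into the four families. -/
def famL (d : F3) (c : ZMod 3) : Finset F3 :=
  if d.1 = 0 then XLn c else if d.2 = 0 then YLn c else if d.1 = d.2 then DLn c else ELn c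

lemma line_class : ∀ p d : F3, d ≠ 0 → ∃ c, lineF p d = famL d c := by decide

lemma diff_mem_Mlat : ∀ L L', AreParallel L L' → eL L - eL L' ∈ Mlat := by
  rintro L L' ⟨p, p', d, hd, rfl, rfl⟩
  obtain ⟨c, hc⟩ := line_class p d hd
  obtain ⟨c', hc'⟩ := line_class p' d hd
  rw [hc, hc']
  unfold famL
  split_ifs
  · exact family_diff XLn (gX_eq ▸ v1_mem_Mlat) sumX c c'
  · exact family_diff YLn (gY_eq ▸ v2_mem_Mlat) sumY c c'
  · exact family_diff DLn gD_mem sumD c c'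
  · exact family_diff ELn gE_mem sumE c c'

lemma v1_mem_Plat : v1 ∈ Plat :=
  Submodule.subset_span (Or.inr ⟨L12, lineF (1, 0) (0, 1),
    ⟨(0, 0), (1, 0), (0, 1), by decide, rfl, rfl⟩, rfl⟩)

lemma v2_mem_Plat : v2 ∈ Plat :=
  Submodule.subset_span (Or.inr ⟨L34, lineF (0, 1) (1, 0),
    ⟨(0, 0), (0, 1), (1, 0), by decide, rfl, rfl⟩, rfl⟩)

lemma Rlat_le_Plat : Rlat ≤ Plat :=
  Submodule.span_mono Set.subset_union_left

lemma diff_mem_Plat (c c' : ZMod 3) : eL (XLn c) - eL (XLn c') ∈ Plat :=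
  Submodule.subset_span (Or.inr ⟨XLn c, XLn c',
    ⟨(c, 0), (c', 0), (0, 1), by decide, rfl, rfl⟩, rfl⟩)

lemma v3_mem_Plat : v3 ∈ Plat := by
  have h : v3 = (eL (XLn 1) - eL (XLn 0)) + (eL (XLn 2) - eL (XLn 0))
      + (3 : ℤ) • eL (XLn 0) := by
    rw [← sumX]; abel
  rw [h]
  exact add_mem (add_mem (diff_mem_Plat 1 0) (diff_mem_Plat 2 0))
    (Rlat_le_Plat (three_eL_mem _))

lemma Plat_eq_Mlat : Plat = Mlat := by
  apply le_antisymm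
  · rw [Plat, Submodule.span_le]
    rintro x (hx | ⟨L, L', hpar, rfl⟩)
    · exact Submodule.subset_span (Or.inl hx)
    · exact diff_mem_Mlat L L' hpar
  · rw [Mlat, Submodule.span_le]
    rintro x (hx | hx)
    · exact Submodule.subset_span (Or.inl hx)
    · rcases hx with rfl | rfl | rfl
      · exact v1_mem_Plat
      · exact v2_mem_Plat
      · exact v3_mem_Plat

/-! ### The quotient count -/

lemma three_smul_quot (w : VP) (hw : (3 : ℤ) • w ∈ Rlat) (k l : ℤ) (hkl : k % 3 = l % 3) :
    k • Rlat.mkQ w = l • Rlat.mkQ w := by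
  have hdvd : (3 : ℤ) ∣ (k - l) := by omega
  obtain ⟨m, hm⟩ := hdvd
  have h0 : (3 : ℤ) • Rlat.mkQ w = 0 := by
    rw [← map_zsmul, Submodule.mkQ_apply, Submodule.Quotient.mk_eq_zero]
    exact hw
  have : k • Rlat.mkQ w - l • Rlat.mkQ w = m • ((3 : ℤ) • Rlat.mkQ w) := by
    rw [← sub_smul, hm, smul_smul, mul_comm]
  rw [h0, smul_zero] at this
  exact sub_eq_zero.mp this

def fQ (a b c : ℤ) : VP := a • v1 + b • v2 + c • v3

lemma fQ_mem_Plat (a b c : ℤ) : fQ a b c ∈ Plat :=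
  add_mem (add_mem (Submodule.smul_mem _ _ v1_mem_Plat) (Submodule.smul_mem _ _ v2_mem_Plat))
    (Submodule.smul_mem _ _ v3_mem_Plat)

lemma mkQ_fQ (a b c : ℤ) : Rlat.mkQ (fQ a b c)
    = a • Rlat.mkQ v1 + b • Rlat.mkQ v2 + c • Rlat.mkQ v3 := by
  rw [fQ, map_add, map_add, map_zsmul, map_zsmul, map_zsmul]

lemma fQ_sub (a b c a' b' c' : ℤ) :
    fQ a b c - fQ a' b' c' = fQ (a - a') (b - b') (c - c') := by
  simp only [fQ, sub_smul]
  abel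

lemma surj_repr : ∀ y ∈ Submodule.map Rlat.mkQ Plat, ∃ a b c : ℤ, y = Rlat.mkQ (fQ a b c) := by
  intro y hy
  obtain ⟨x, hx, rfl⟩ := hy
  rw [Plat_eq_Mlat, Mlat] at hx
  have h1 : Rlat.mkQ x ∈ Submodule.span ℤ (Rlat.mkQ '' (Rgen ∪ {v1, v2, v3})) := by
    rw [← Submodule.map_span]
    exact ⟨x, hx, rfl⟩
  have h2 : Submodule.span ℤ (Rlat.mkQ '' (Rgen ∪ {v1, v2, v3}))
      ≤ Submodule.span ℤ {Rlat.mkQ v1, Rlat.mkQ v2, Rlat.mkQ v3} := by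
    rw [Submodule.span_le]
    rintro z ⟨g, hg | hg, rfl⟩
    · have hgR : g ∈ Rlat := Submodule.subset_span hg
      have : Rlat.mkQ g = 0 := by
        rw [Submodule.mkQ_apply, Submodule.Quotient.mk_eq_zero]
        exact hgR
      rw [SetLike.mem_coe, this]
      exact Submodule.zero_mem _
    · rcases hg with rfl | rfl | rfl
      · exact Submodule.subset_span (by simp)
      · exact Submodule.subset_span (by simp)
      · exact Submodule.subset_span (by simp)
  have h3 := h2 h1
  obtain ⟨a, z1, hz1, hy1⟩ := Submodule.mem_span_insert.mp h3
  obtain ⟨b, z2, hz2, hy2⟩ := Submodule.mem_span_insert.mp hz1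
  obtain ⟨cc, hy3⟩ := Submodule.mem_span_singleton.mp hz2
  exact ⟨a, b, cc, by rw [mkQ_fQ, hy1, hy2, ← hy3]; abel⟩

lemma v_coords :
    (v1 ((2,2),0) = 0 ∧ v2 ((2,2),0) = 0 ∧ v3 ((2,2),0) = 1/3) ∧
    (v1 ((0,2),0) = 1/3 ∧ v2 ((0,2),0) = 0 ∧ v3 ((0,2),0) = 1/3) ∧
    (v1 ((2,0),0) = 0 ∧ v2 ((2,0),0) = 1/3 ∧ v3 ((2,0),0) = 1/3) := by
  simp only [v1, v2, Pi.sub_apply, eL_apply, v3_apply, L12, L34]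
  simp (config := { decide := true })

lemma fQ_apply (a b c : ℤ) (i : IP) :
    fQ a b c i = (a : ℚ) * v1 i + (b : ℚ) * v2 i + (c : ℚ) * v3 i := by
  simp [fQ]

lemma dvd_of_fQ_int (a b c : ℤ) (h : fQ a b c ∈ Rlat) : 3 ∣ a ∧ 3 ∣ b ∧ 3 ∣ c := by
  have hint := Rlat_le_int h
  obtain ⟨⟨c11, c12, c13⟩, ⟨c21, c22, c23⟩, c31, c32, c33⟩ := v_coords
  obtain ⟨n1, hn1⟩ := hint (((2,2):F3), 0)
  obtain ⟨n2, hn2⟩ := hint (((0,2):F3), 0)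
  obtain ⟨n3, hn3⟩ := hint (((2,0):F3), 0)
  rw [fQ_apply, c11, c12, c13] at hn1
  rw [fQ_apply, c21, c22, c23] at hn2
  rw [fQ_apply, c31, c32, c33] at hn3
  have hc : c = 3 * n1 := by
    have : (c : ℚ) = 3 * n1 := by field_simp at hn1 ⊢; linarith
    exact_mod_cast this
  have ha : a + c = 3 * n2 := by
    have : (a : ℚ) + c = 3 * n2 := by field_simp at hn2 ⊢; linarith
    exact_mod_cast this
  have hb : b + c = 3 * n3 := by
    have : (b : ℚ) + c = 3 * n3 := by field_simp at hn3 ⊢; linarith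
    exact_mod_cast this
  refine ⟨⟨n2 - n1, by omega⟩, ⟨n3 - n1, by omega⟩, ⟨n1, hc⟩⟩

lemma val_cast_mod (a : ℤ) : (((a : ZMod 3).val : ℤ)) % 3 = a % 3 := by
  have h := ZMod.val_intCast (n := 3) a
  push_cast at h ⊢
  omega

lemma val_inj3 : ∀ a a' : ZMod 3, a.val = a'.val → a = a' := by decide

end Aux

theorem statement3 :
    -- P is generated by R together with v₁, v₂, v₃
    (Plat = Submodule.span ℤ (Rgen ∪ {v1, v2, v3})) ∧
    -- R has index 27 in P, i.e. |P/R| = 3³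
    Nat.card (Submodule.map Rlat.mkQ Plat) = 27 := by
  refine ⟨Plat_eq_Mlat, ?_⟩
  let F : ZMod 3 × ZMod 3 × ZMod 3 → Submodule.map Rlat.mkQ Plat := fun x =>
    ⟨Rlat.mkQ (fQ x.1.val x.2.1.val x.2.2.val), ⟨_, fQ_mem_Plat _ _ _, rfl⟩⟩
  have hinj : Function.Injective F := by
    rintro ⟨a, b, c⟩ ⟨a', b', c'⟩ h
    have h0 : Rlat.mkQ (fQ a.val b.val c.val) = Rlat.mkQ (fQ a'.val b'.val c'.val) :=
      congrArg Subtype.val h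
    rw [Submodule.mkQ_apply, Submodule.mkQ_apply, Submodule.Quotient.eq] at h0
    rw [fQ_sub] at h0
    obtain ⟨hda, hdb, hdc⟩ := dvd_of_fQ_int _ _ _ h0
    have la := a.val_lt; have la' := a'.val_lt
    have lb := b.val_lt; have lb' := b'.val_lt
    have lc := c.val_lt; have lc' := c'.val_lt
    have ea : a = a' := val_inj3 _ _ (by omega)
    have eb : b = b' := val_inj3 _ _ (by omega)
    have ec : c = c' := val_inj3 _ _ (by omega)
    simp [ea, eb, ec]
  have hsurj : Function.Surjective F := by
    rintro ⟨y, hy⟩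
    obtain ⟨a, b, c, rfl⟩ := surj_repr y hy
    refine ⟨((a : ZMod 3), (b : ZMod 3), (c : ZMod 3)), ?_⟩
    apply Subtype.ext
    show Rlat.mkQ (fQ _ _ _) = Rlat.mkQ (fQ a b c)
    rw [mkQ_fQ, mkQ_fQ]
    rw [three_smul_quot v1 three_v1_mem _ a (val_cast_mod a),
      three_smul_quot v2 three_v2_mem _ b (val_cast_mod b),
      three_smul_quot v3 three_v3_mem _ c (val_cast_mod c)]
  have := Nat.card_eq_of_bijective F ⟨hinj, hsurj⟩
  rw [← this]
  simp [Nat.card_eq_fintype_card]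
end
end

section
/- For every nonzero p ∈ P*, one has |⟨p,p⟩| ≥ 2; equivalently, since the form is negative definite on the ℚ-span of P, every nonzero p ∈ P* satisfies ⟨p,p⟩ ≤ −2. -/
noncomputable section

/-!
Pairing `p ∈ P*` with the roots `E_t^(k) ∈ R ⊆ P` gives integers `n t k` that determine `p`,
and `⟨p, p⟩ = -(2/3) ∑ₜ (a² + ab + b²)` with `(a, b) = n t`. Pairing with the glue vectors
`e(L') - e(L'')` says that the classes `a + 2b mod 3` have equal sums along parallel lines.
A nonzero function on `𝔽₃²` with that property is supported on at least three points, each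
contributing at least `1` to the sum; if all classes vanish, every term is divisible by `3`.
Either way the sum is at least `3`, so `⟨p, p⟩ ≤ -2`.
-/

open Finset

lemma BP_eq_toLinearMap₂' (x y : VP) : BP x y = Matrix.toLinearMap₂' ℚ (Matrix.of GP) x y := by
  simp only [BP, Matrix.toLinearMap₂'_apply, Matrix.of_apply, smul_eq_mul]
  exact sum_congr rfl fun _ _ => sum_congr rfl fun _ _ => by ring

lemma BP_add_right (x a b : VP) : BP x (a + b) = BP x a + BP x b := by
  simp only [BP_eq_toLinearMap₂', map_add]

lemma BP_sub_right (x a b : VP) : BP x (a - b) = BP x a - BP x b := by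
  simp only [BP_eq_toLinearMap₂', map_sub]

lemma BP_smul_right (x : VP) (c : ℚ) (a : VP) : BP x (c • a) = c * BP x a := by
  simp only [BP_eq_toLinearMap₂', map_smul, smul_eq_mul]

lemma BP_sum_right {α : Type*} (x : VP) (s : Finset α) (f : α → VP) :
    BP x (∑ i ∈ s, f i) = ∑ i ∈ s, BP x (f i) := by
  simp only [BP_eq_toLinearMap₂', map_sum]

lemma GP_comm (i j : IP) : GP i j = GP j i := by
  simp only [GP, eq_comm]

lemma BP_single_right (x : VP) (i : IP) : BP x (Pi.single i 1) = ∑ j, x j * GP j i := by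
  simp [BP, Pi.single_apply]

lemma BP_eq_sum_mul_BP_single (x y : VP) : BP x y = ∑ i, x i * BP y (Pi.single i 1) := by
  simp_rw [BP_single_right, mul_sum]
  exact sum_congr rfl fun i _ => sum_congr rfl fun j _ => by rw [GP_comm]; ring

lemma BP_Ev (x : VP) (t : F3) (k : Fin 2) : BP x (Ev t k) = x (t, k + 1) - 2 * x (t, k) := by
  rw [Ev, BP_single_right, Fintype.sum_prod_type, sum_eq_single t]
  · fin_cases k <;>
      simp only [GP, ↓reduceIte, Fin.zero_eta, Fin.mk_one, Fin.isValue, mul_ite, mul_neg, mul_one,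
        Fin.sum_univ_two, one_ne_zero, zero_ne_one, zero_add, Fin.reduceAdd] <;> ring
  · intro s _ hs
    simp [GP, hs]
  · simp

lemma BP_self_eq_sum (x : VP) : BP x x = ∑ t, ∑ k, x (t, k) * BP x (Ev t k) := by
  rw [BP_eq_sum_mul_BP_single, Fintype.sum_prod_type]
  rfl

lemma eq_zero_of_forall_BP_Ev_eq_zero {x : VP} (h : ∀ t k, BP x (Ev t k) = 0) : x = 0 := by
  ext ⟨t, k⟩
  have h0 := h t 0
  have h1 := h t 1
  simp only [BP_Ev, Fin.reduceAdd] at h0 h1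
  fin_cases k <;> simp only [Fin.zero_eta, Fin.mk_one, Fin.isValue, Pi.zero_apply] <;> linarith

/-- If `v` lists the pairings of `x` with the two simple roots of one `A₂` block, that block
contributes `-(2/3) * a2Norm v` to `⟨x, x⟩`, and `a2Class v` is the class of `x` in `A₂*/A₂ ≅ ℤ/3`
(it is `⟨x, E_t⟩ mod 3`). -/
def a2Norm (v : Fin 2 → ℤ) : ℤ := v 0 ^ 2 + v 0 * v 1 + v 1 ^ 2

def a2Class (v : Fin 2 → ℤ) : ZMod 3 := ((v 0 + 2 * v 1 : ℤ) : ZMod 3)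

lemma a2Norm_nonneg (v : Fin 2 → ℤ) : 0 ≤ a2Norm v := by
  unfold a2Norm
  nlinarith [sq_nonneg (v 0 + v 1), sq_nonneg (v 0), sq_nonneg (v 1)]

lemma one_le_a2Norm {v : Fin 2 → ℤ} (hv : v ≠ 0) : 1 ≤ a2Norm v := by
  obtain ⟨k, hk⟩ := Function.ne_iff.mp hv
  unfold a2Norm
  fin_cases k <;> simp only [Fin.zero_eta, Fin.mk_one, Fin.isValue, Pi.zero_apply, ne_eq] at hk <;>
    nlinarith [sq_nonneg (v 0 + v 1), sq_nonneg (v 0), sq_nonneg (v 1), sq_pos_of_ne_zero hk]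

lemma three_dvd_a2Norm {v : Fin 2 → ℤ} (hv : a2Class v = 0) : 3 ∣ a2Norm v := by
  obtain ⟨k, hk⟩ := (ZMod.intCast_zmod_eq_zero_iff_dvd _ 3).mp hv
  exact ⟨3 * k ^ 2 - v 1 * (v 0 + v 1), by
    rw [a2Norm, show v 0 = 3 * k - 2 * v 1 by push_cast at hk; linarith]; ring⟩

def HasEqualParallelSums {M : Type*} [AddCommMonoid M] (c : F3 → M) : Prop :=
  ∀ x y d : F3, d ≠ 0 → ∑ s : ZMod 3, c (x + s • d) = ∑ s : ZMod 3, c (y + s • d)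

/- Of the four directions, at most one joins `t` to `u`; in any other direction the three
parallel lines are pairwise disjoint, so one of them misses both `t` and `u`. -/
set_option synthInstance.maxSize 1000 in
set_option synthInstance.maxHeartbeats 1000000 in
lemma exists_direction_avoiding (t u : F3) : ∃ d x : F3, d ≠ 0 ∧
    (∀ s : ZMod 3, s ≠ 0 → t + s • d ≠ t ∧ t + s • d ≠ u) ∧
    ∀ s : ZMod 3, x + s • d ≠ t ∧ x + s • d ≠ u := by
  revert t u
  decide

namespace HasEqualParallelSums

variable {M : Type*} [AddCommMonoid M] {c : F3 → M}

lemma apply_eq_zero (hc : HasEqualParallelSums c) {t u : F3}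
    (h : ∀ v, v ≠ t → v ≠ u → c v = 0) : c t = 0 := by
  obtain ⟨d, x, hd, hline_t, hline_x⟩ := exists_direction_avoiding t u
  calc c t = ∑ s : ZMod 3, c (t + s • d) := by
        rw [sum_eq_single 0 (fun s _ hs => h _ (hline_t s hs).1 (hline_t s hs).2) (by simp)]
        simp
    _ = ∑ s : ZMod 3, c (x + s • d) := hc t x d hd
    _ = 0 := sum_eq_zero fun s _ => h _ (hline_x s).1 (hline_x s).2

lemma three_le_card_support [DecidablePred fun t => c t ≠ 0] (hc : HasEqualParallelSums c)
    (h0 : c ≠ 0) : 3 ≤ #{t | c t ≠ 0} := by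
  by_contra! hcard
  obtain ⟨t, ht⟩ := Function.ne_iff.mp h0
  have ht_mem : t ∈ ({t | c t ≠ 0} : Finset F3) := by simpa using ht
  obtain ⟨u, hu⟩ := card_le_one_iff_subset_singleton.mp
    (show #(({t | c t ≠ 0} : Finset F3).erase t) ≤ 1 by rw [card_erase_of_mem ht_mem]; omega)
  refine ht (hc.apply_eq_zero (u := u) fun v hvt hvu => ?_)
  by_contra hv
  exact hvu (mem_singleton.mp (hu (mem_erase.mpr ⟨hvt, by simpa using hv⟩)))

end HasEqualParallelSums

lemma three_le_sum_a2Norm {n : F3 → Fin 2 → ℤ} (hn : n ≠ 0)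
    (hc : HasEqualParallelSums (a2Class ∘ n)) : 3 ≤ ∑ t, a2Norm (n t) := by
  by_cases hzero : a2Class ∘ n = 0
  · obtain ⟨t, ht⟩ := Function.ne_iff.mp hn
    obtain ⟨k, hk⟩ := three_dvd_a2Norm (congrFun hzero t)
    have := one_le_a2Norm ht
    calc 3 ≤ a2Norm (n t) := by omega
      _ ≤ ∑ t, a2Norm (n t) := single_le_sum (fun t _ => a2Norm_nonneg _) (mem_univ t)
  · calc (3 : ℤ) ≤ #{t | a2Class (n t) ≠ 0} := by exact_mod_cast hc.three_le_card_support hzero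
      _ ≤ ∑ t ∈ {t | a2Class (n t) ≠ 0}, a2Norm (n t) := by
        rw [← nsmul_one]
        refine card_nsmul_le_sum _ _ _ fun t ht => one_le_a2Norm fun hnt => ?_
        simp [hnt, a2Class] at ht
      _ ≤ ∑ t, a2Norm (n t) :=
        sum_le_sum_of_subset_of_nonneg (subset_univ _) fun t _ _ => a2Norm_nonneg _

lemma sum_lineF {M : Type*} [AddCommMonoid M] (g : F3 → M) (x : F3) {d : F3} (hd : d ≠ 0) :
    ∑ t ∈ lineF x d, g t = ∑ s : ZMod 3, g (x + s • d) :=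
  sum_image fun _ _ _ _ h => smul_left_injective (ZMod 3) hd (add_left_cancel h)

lemma BP_EV (x : VP) (t : F3) : BP x (EV t) = BP x (Ev t 0) + 2 * BP x (Ev t 1) := by
  rw [EV, BP_add_right, ← Nat.cast_smul_eq_nsmul ℚ, BP_smul_right]
  norm_num

lemma Ev_mem_Plat (t : F3) (k : Fin 2) : Ev t k ∈ Plat :=
  Submodule.subset_span (Or.inl ⟨t, k, rfl⟩)

lemma eL_sub_eL_mem_Plat (x y : F3) {d : F3} (hd : d ≠ 0) :
    eL (lineF x d) - eL (lineF y d) ∈ Plat :=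
  Submodule.subset_span (Or.inr ⟨_, _, ⟨x, y, d, hd, rfl, rfl⟩, rfl⟩)

lemma BP_self_eq_a2Norm {p : VP} {n : F3 → Fin 2 → ℤ} (hn : ∀ t k, BP p (Ev t k) = n t k) :
    BP p p = -2 / 3 * ∑ t, (a2Norm (n t) : ℚ) := by
  rw [BP_self_eq_sum, mul_sum]
  refine sum_congr rfl fun t _ => ?_
  have h0 := hn t 0
  have h1 := hn t 1
  simp only [BP_Ev, Fin.reduceAdd] at h0 h1
  rw [Fin.sum_univ_two, hn, hn, a2Norm,
    show p (t, 0) = -(2 * n t 0 + n t 1) / 3 by linarith,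
    show p (t, 1) = -(n t 0 + 2 * n t 1) / 3 by linarith]
  push_cast
  ring

lemma hasEqualParallelSums_a2Class {p : VP} {n : F3 → Fin 2 → ℤ}
    (hn : ∀ t k, BP p (Ev t k) = n t k) (hp : p ∈ dualP Plat) :
    HasEqualParallelSums (a2Class ∘ n) := by
  intro x y d hd
  obtain ⟨m, hm⟩ := hp _ (eL_sub_eL_mem_Plat x y hd)
  have hline : ∀ z, BP p (eL (lineF z d)) =
      3⁻¹ * ∑ s : ZMod 3, ((n (z + s • d) 0 : ℚ) + 2 * n (z + s • d) 1) := fun z => by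
    simp only [eL, BP_smul_right, BP_sum_right, sum_lineF _ _ hd, BP_EV, hn]
  rw [BP_sub_right, hline, hline] at hm
  simp only [Function.comp_apply, a2Class, ← Int.cast_sum]
  rw [ZMod.intCast_eq_intCast_iff_dvd_sub]
  exact ⟨-m, by qify; linarith⟩

theorem statement4 :
    ∀ p ∈ dualP Plat, p ≠ 0 → 2 ≤ |BP p p| ∧ BP p p ≤ -2 := by
  intro p hp hp0
  choose n hn using fun t k => hp _ (Ev_mem_Plat t k)
  have hn0 : n ≠ 0 := by
    rintro rfl
    exact hp0 (eq_zero_of_forall_BP_Ev_eq_zero fun t k => by simpa using hn t k)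
  have h3 : (3 : ℚ) ≤ ∑ t, (a2Norm (n t) : ℚ) := by
    exact_mod_cast three_le_sum_a2Norm hn0 (hasEqualParallelSums_a2Class hn hp)
  have hpp : BP p p ≤ -2 := by
    rw [BP_self_eq_a2Norm hn]
    linarith
  exact ⟨by rw [abs_of_neg (by linarith)]; linarith, hpp⟩
end
end
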